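/- Let A and B be real symmetric positive semidefinite m×m matrices and let c > 0. Then ‖A(A + cI)⁻¹ − B(B + cI)⁻¹‖₂ ≤ (1/c)·‖A − B‖₂. -/

import Mathlib

/-!
Write `M = A + cI` and `N = B + cI`. Since `A M⁻¹ = I - c M⁻¹`, the resolvent identity gives
`A M⁻¹ - B N⁻¹ = c (N⁻¹ - M⁻¹) = c M⁻¹ (A - B) N⁻¹`. Positivity of `A` gives
`c ‖x‖² ≤ re ⟪M x, x⟫ ≤ ‖M x‖ ‖x‖`, hence `‖M⁻¹‖ ≤ 1 / c`, and likewise `‖N⁻¹‖ ≤ 1 / c`;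
submultiplicativity of the operator norm then bounds the difference by `c · c⁻¹ ‖A - B‖ c⁻¹`.
-/

open Matrix

/-- Spectral (operator 2-) norm of a real square matrix. -/
noncomputable def matSpectralNorm {m : ℕ} (A : Matrix (Fin m) (Fin m) ℝ) : ℝ :=
  ‖Matrix.toEuclideanCLM (𝕜 := ℝ) A‖

/-- Euclidean (ℓ²) norm of a vector in ℝ^m. -/
noncomputable def l2norm {m : ℕ} (v : Fin m → ℝ) : ℝ :=
  Real.sqrt (∑ i, v i ^ 2)

open scoped Matrix.Norms.L2Operator ComplexOrder InnerProductSpace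

namespace Matrix

variable {n : Type*} [Fintype n] [DecidableEq n]

section Resolvent

variable {R α : Type*} [CommRing α] [CommSemiring R] [Algebra R α] {A B : Matrix n n α} {c : R}

theorem mul_inv_add_smul_one (h : IsUnit (A + c • 1)) :
    A * (A + c • 1)⁻¹ = 1 - c • (A + c • 1)⁻¹ := by
  have hinv := mul_nonsing_inv _ ((isUnit_iff_isUnit_det _).1 h)
  calc A * (A + c • 1)⁻¹ = (A + c • 1) * (A + c • 1)⁻¹ - c • (A + c • 1)⁻¹ := by
        rw [add_mul, smul_one_mul, add_sub_cancel_right]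
    _ = 1 - c • (A + c • 1)⁻¹ := by rw [hinv]

theorem mul_inv_add_smul_one_sub_mul_inv_add_smul_one
    (hA : IsUnit (A + c • 1)) (hB : IsUnit (B + c • 1)) :
    A * (A + c • 1)⁻¹ - B * (B + c • 1)⁻¹ =
      c • ((A + c • 1)⁻¹ * (A - B) * (B + c • 1)⁻¹) := by
  have hdiff : (A + c • 1)⁻¹ - (B + c • 1)⁻¹ = (A + c • 1)⁻¹ * (B - A) * (B + c • 1)⁻¹ := by
    rw [inv_sub_inv (iff_of_true hA hB), add_sub_add_right_eq_sub]
  rw [mul_inv_add_smul_one hA, mul_inv_add_smul_one hB, sub_sub_sub_cancel_left, ← smul_sub,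
    ← neg_sub B A, mul_neg, neg_mul, ← hdiff, neg_sub]

end Resolvent

variable {𝕜 : Type*} [RCLike 𝕜]

theorem l2_opNorm_real_smul (c : ℝ) (X : Matrix n n 𝕜) : ‖c • X‖ = |c| * ‖X‖ := by
  rw [RCLike.real_smul_eq_coe_smul (K := 𝕜), norm_smul, RCLike.norm_ofReal]

theorem l2_opNorm_inv_le_of_mul_norm_le {M : Matrix n n 𝕜} {c : ℝ} (hc : 0 < c)
    (h : ∀ x, c * ‖x‖ ≤ ‖toEuclideanCLM (𝕜 := 𝕜) M x‖) : ‖M⁻¹‖ ≤ c⁻¹ := by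
  by_cases hM : IsUnit M.det
  · rw [cstar_norm_def]
    refine ContinuousLinearMap.opNorm_le_bound _ (by positivity) fun y => ?_
    have hy : toEuclideanCLM (𝕜 := 𝕜) M (toEuclideanCLM (𝕜 := 𝕜) M⁻¹ y) = y := by
      change (toEuclideanCLM (𝕜 := 𝕜) M * toEuclideanCLM (𝕜 := 𝕜) M⁻¹) y = y
      rw [← map_mul, mul_nonsing_inv M hM, map_one]
      rfl
    rw [inv_mul_eq_div, le_div_iff₀' hc]
    simpa only [hy] using h (toEuclideanCLM (𝕜 := 𝕜) M⁻¹ y)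
  · rw [nonsing_inv_apply_not_isUnit M hM, norm_zero]
    positivity

namespace PosSemidef

variable {A B : Matrix n n 𝕜} {c : ℝ}

theorem isUnit_add_smul_one (hA : A.PosSemidef) (hc : 0 < c) : IsUnit (A + c • 1) :=
  (PosDef.posSemidef_add hA (PosDef.one.smul hc)).isUnit

theorem mul_norm_le_norm_toEuclideanCLM_add_smul_one (hA : A.PosSemidef)
    (x : EuclideanSpace 𝕜 n) : c * ‖x‖ ≤ ‖toEuclideanCLM (𝕜 := 𝕜) (A + c • 1) x‖ := by
  have hsplit :
      toEuclideanCLM (𝕜 := 𝕜) (A + c • 1) x = toEuclideanCLM (𝕜 := 𝕜) A x + (c : 𝕜) • x := by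
    rw [RCLike.real_smul_eq_coe_smul (K := 𝕜), map_add, map_smul, map_one]
    rfl
  have hre : RCLike.re ⟪toEuclideanCLM (𝕜 := 𝕜) (A + c • 1) x, x⟫_𝕜 =
      RCLike.re ⟪toEuclideanCLM (𝕜 := 𝕜) A x, x⟫_𝕜 + c * ‖x‖ ^ 2 := by
    rw [hsplit, inner_add_left, inner_smul_left, map_add, inner_self_eq_norm_sq_to_K]
    simp only [RCLike.conj_ofReal, RCLike.mul_re, RCLike.ofReal_re, RCLike.re_ofReal_pow,
      RCLike.ofReal_im, RCLike.im_ofReal_pow, mul_zero, sub_zero]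
  have hApos : 0 ≤ RCLike.re ⟪toEuclideanCLM (𝕜 := 𝕜) A x, x⟫_𝕜 :=
    (isPositive_toEuclideanLin_iff.2 hA).re_inner_nonneg_left x
  have hsq : c * ‖x‖ ^ 2 ≤ ‖toEuclideanCLM (𝕜 := 𝕜) (A + c • 1) x‖ * ‖x‖ :=
    calc c * ‖x‖ ^ 2 ≤ RCLike.re ⟪toEuclideanCLM (𝕜 := 𝕜) (A + c • 1) x, x⟫_𝕜 := by
          rw [hre]; linarith
      _ ≤ ‖toEuclideanCLM (𝕜 := 𝕜) (A + c • 1) x‖ * ‖x‖ := re_inner_le_norm _ _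
  rcases (norm_nonneg x).eq_or_lt with hx | hx
  · rw [← hx, mul_zero]
    exact norm_nonneg _
  · nlinarith

theorem l2_opNorm_inv_add_smul_one_le (hA : A.PosSemidef) (hc : 0 < c) :
    ‖(A + c • 1)⁻¹‖ ≤ c⁻¹ :=
  l2_opNorm_inv_le_of_mul_norm_le hc hA.mul_norm_le_norm_toEuclideanCLM_add_smul_one

theorem l2_opNorm_mul_inv_add_smul_one_sub_le (hA : A.PosSemidef) (hB : B.PosSemidef)
    (hc : 0 < c) :
    ‖A * (A + c • 1)⁻¹ - B * (B + c • 1)⁻¹‖ ≤ c⁻¹ * ‖A - B‖ := by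
  rw [mul_inv_add_smul_one_sub_mul_inv_add_smul_one (hA.isUnit_add_smul_one hc)
    (hB.isUnit_add_smul_one hc), l2_opNorm_real_smul, abs_of_pos hc]
  calc c * ‖(A + c • 1)⁻¹ * (A - B) * (B + c • 1)⁻¹‖
      ≤ c * (‖(A + c • 1)⁻¹‖ * ‖A - B‖ * ‖(B + c • 1)⁻¹‖) := by gcongr; exact norm_mul₃_le
    _ ≤ c * (c⁻¹ * ‖A - B‖ * c⁻¹) := by
        gcongr
        · exact hA.l2_opNorm_inv_add_smul_one_le hc
        · exact hB.l2_opNorm_inv_add_smul_one_le hc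
    _ = c⁻¹ * ‖A - B‖ := by field_simp

end PosSemidef

end Matrix

/-- Contraction inequality (core matrix estimate of Lemma 1). -/
theorem resolvent_contraction {m : ℕ}
    (A B : Matrix (Fin m) (Fin m) ℝ)
    (hA : A.PosSemidef) (hB : B.PosSemidef)
    (c : ℝ) (hc : 0 < c) :
    matSpectralNorm (A * (A + c • 1)⁻¹ - B * (B + c • 1)⁻¹) ≤
      (1 / c) * matSpectralNorm (A - B) := by
  rw [one_div]
  exact hA.l2_opNorm_mul_inv_add_smul_one_sub_le hB hc
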